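/- Let L be the Laplacian of a connected directed graph on n nodes and L̂_u its effective-resistance-preserving symmetrization. Then there exist a projection matrix H onto 𝟙^⊥ with HL = L and a skew-symmetric matrix K with K𝟙 = 0 and 𝟙ᵀK = 0 such that L = H(I_n + 2K)L̂_u. -/

import Mathlib

/-!
Write `L̄ = Q L Qᵀ` for the reduced Laplacian; its spectrum lies in the open right half-plane, so
it is invertible. Take `H = L Qᵀ L̄⁻¹ Q` and `K = ½ Qᵀ (2 L̄ S - I) Q`.

The Lyapunov solution `S` is symmetric: `S - Sᵀ` solves the Sylvester equation
`L̄ D = D (-L̄ᵀ)`, and since `L̄` and `-L̄ᵀ` have disjoint spectra, `χ(L̄)` is invertible for the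
characteristic polynomial `χ` of `-L̄ᵀ`, which forces `D = 0`. Symmetry makes `S` invertible and
`2 L̄ S - I = L̄ S - S L̄ᵀ` skew, and uniqueness of the Moore–Penrose inverse gives
`L̂ᵤ = Qᵀ (2S)⁻¹ Q`. Then `L̄⁻¹ (I + (2 L̄ S - I)) (2S)⁻¹ = I`, so
`H (I + 2K) L̂ᵤ = L QᵀQ = L P_n = L`.
-/

open Matrix Polynomial

/-- The four Moore–Penrose conditions characterizing the pseudoinverse. -/
def IsMoorePenrose {m : Type*} [Fintype m] [DecidableEq m]
    (A B : Matrix m m ℝ) : Prop :=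
  A * B * A = A ∧ B * A * B = B ∧ (A * B)ᵀ = A * B ∧ (B * A)ᵀ = B * A

namespace Matrix

variable {K : Type*} [Field K] {m n : Type*} [Fintype m] [DecidableEq m] [Fintype n]
  [DecidableEq n]

theorem spectrum_transpose (M : Matrix n n K) : spectrum K Mᵀ = spectrum K M := by
  ext μ
  rw [mem_spectrum_iff_isRoot_charpoly, mem_spectrum_iff_isRoot_charpoly, charpoly_transpose]

theorem aeval_mul_eq_mul_aeval_of_mul_eq_mul {R : Type*} [CommRing R] {A : Matrix m m R}
    {B : Matrix n n R} {X : Matrix m n R} (hAX : A * X = X * B) (p : R[X]) :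
    aeval A p * X = X * aeval B p := by
  have hpow (k : ℕ) : A ^ k * X = X * B ^ k := by
    induction k with
    | zero => simp
    | succ k ih => rw [pow_succ', Matrix.mul_assoc, ih, ← Matrix.mul_assoc, hAX, pow_succ',
        Matrix.mul_assoc]
  induction p using Polynomial.induction_on' with
  | add p q hp hq => rw [map_add, map_add, Matrix.add_mul, Matrix.mul_add, hp, hq]
  | monomial k a =>
    simp only [aeval_monomial, Algebra.algebraMap_eq_smul_one, Matrix.smul_mul, Matrix.mul_smul,
      Matrix.one_mul, hpow]

theorem eq_zero_of_mul_eq_mul_of_disjoint_spectrum [IsAlgClosed K] {A : Matrix m m K}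
    {B : Matrix n n K} {X : Matrix m n K} (hAX : A * X = X * B)
    (hAB : Disjoint (spectrum K A) (spectrum K B)) : X = 0 := by
  rcases isEmpty_or_nonempty n with hn | hn
  · ext i j; exact isEmptyElim j
  have hdeg : 0 < B.charpoly.degree := by
    rw [charpoly_degree_eq_dim]; exact_mod_cast Fintype.card_pos
  have hunit : IsUnit (aeval A B.charpoly) := by
    rw [← spectrum.zero_notMem_iff K, spectrum.map_polynomial_aeval_of_degree_pos _ _ hdeg]
    rintro ⟨μ, hμA, hμB⟩
    exact hAB.ne_of_mem hμA (mem_spectrum_iff_isRoot_charpoly.mpr hμB) rfl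
  have hPX : aeval A B.charpoly * X = 0 := by
    rw [aeval_mul_eq_mul_aeval_of_mul_eq_mul hAX, aeval_self_charpoly, Matrix.mul_zero]
  rw [← Matrix.one_mul X, ← nonsing_inv_mul _ ((isUnit_iff_isUnit_det _).mp hunit),
    Matrix.mul_assoc, hPX, Matrix.mul_zero]

end Matrix

section Lyapunov

variable {m : Type*} [Fintype m] [DecidableEq m]

theorem isUnit_det_of_zero_notMem_spectrum_map {A : Matrix m m ℝ}
    (hA : (0 : ℂ) ∉ spectrum ℂ (A.map Complex.ofReal)) : IsUnit A.det := by
  have hdet : ((A.det : ℝ) : ℂ) = (A.map Complex.ofReal).det :=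
    RingHom.map_det Complex.ofRealHom A
  rw [spectrum.zero_notMem_iff, isUnit_iff_isUnit_det, ← hdet] at hA
  simpa using hA

theorem transpose_eq_of_lyapunov {A S C : Matrix m m ℝ}
    (hA : ∀ μ ∈ spectrum ℂ (A.map Complex.ofReal), 0 < μ.re) (hS : A * S + S * Aᵀ = C)
    (hC : Cᵀ = C) : Sᵀ = S := by
  have hSt : A * Sᵀ + Sᵀ * Aᵀ = C := by
    rw [← hC, ← hS, add_comm]; simp only [transpose_add, transpose_mul, transpose_transpose]
  have hD : A * (S - Sᵀ) = (S - Sᵀ) * -Aᵀ := by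
    rw [Matrix.mul_sub, eq_sub_of_add_eq hS, eq_sub_of_add_eq hSt, Matrix.mul_neg, Matrix.sub_mul]
    abel
  have hDc : (S - Sᵀ).map Complex.ofReal = (0 : Matrix m m ℂ) := by
    refine eq_zero_of_mul_eq_mul_of_disjoint_spectrum (A := A.map Complex.ofReal)
      (B := -(A.map Complex.ofReal)ᵀ) ?_ ?_
    · have hDc := congrArg Complex.ofRealHom.mapMatrix hD
      simp only [map_mul, map_neg, RingHom.mapMatrix_apply, transpose_map] at hDc
      exact hDc
    · rw [← spectrum.neg_eq, spectrum_transpose, Set.disjoint_left]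
      intro μ hμ hμ'
      have := hA (-μ) (Set.mem_neg.mp hμ')
      simp only [Complex.neg_re] at this
      linarith [hA μ hμ]
  have hD0 : S - Sᵀ = 0 :=
    Matrix.map_injective Complex.ofReal_injective (hDc.trans (Matrix.map_zero _ rfl).symm)
  exact (sub_eq_zero.mp hD0).symm

theorem isUnit_det_of_lyapunov {R : Type*} [Field R] [LinearOrder R] [IsStrictOrderedRing R]
    {A S : Matrix m m R} (hS : A * S + S * Aᵀ = 1) (hSt : Sᵀ = S) : IsUnit S.det := by
  rw [isUnit_iff_ne_zero]
  intro h
  obtain ⟨v, hv, hSv⟩ := exists_mulVec_eq_zero_iff.mpr h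
  have hv_range : v = S *ᵥ (Aᵀ *ᵥ v) := by
    calc v = (A * S + S * Aᵀ) *ᵥ v := by rw [hS, one_mulVec]
    _ = S *ᵥ (Aᵀ *ᵥ v) := by
      rw [add_mulVec, ← mulVec_mulVec, hSv, mulVec_zero, zero_add, mulVec_mulVec]
  refine hv (dotProduct_self_eq_zero.mp ?_)
  calc v ⬝ᵥ v = v ⬝ᵥ S *ᵥ (Aᵀ *ᵥ v) := congrArg _ hv_range
  _ = (v ᵥ* S) ⬝ᵥ (Aᵀ *ᵥ v) := dotProduct_mulVec _ _ _
  _ = 0 := by rw [← mulVec_transpose, hSt, hSv, zero_dotProduct]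

theorem transpose_mul_two_smul_sub_one_of_lyapunov {R : Type*} [CommRing R] {A S : Matrix m m R}
    (hS : A * S + S * Aᵀ = 1) (hSt : Sᵀ = S) :
    (A * ((2 : R) • S) - 1)ᵀ = -(A * ((2 : R) • S) - 1) := by
  rw [transpose_sub, transpose_mul, transpose_smul, hSt, transpose_one, Matrix.smul_mul,
    Matrix.mul_smul, eq_sub_of_add_eq' hS, two_smul, two_smul]
  abel

end Lyapunov

section Compression

variable {R : Type*} [CommRing R] {k m : Type*} [Fintype k] {Q : Matrix k m R}

theorem conj_transpose_eq_neg {A : Matrix k k R} (hA : Aᵀ = -A) :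
    (Qᵀ * A * Q)ᵀ = -(Qᵀ * A * Q) := by
  rw [transpose_mul, transpose_mul, transpose_transpose, hA, Matrix.neg_mul, Matrix.mul_neg,
    Matrix.mul_assoc]

variable [Fintype m]

theorem conj_mulVec_eq_zero {v : m → R} (hv : Q *ᵥ v = 0) (A : Matrix k k R) :
    (Qᵀ * A * Q) *ᵥ v = 0 := by
  rw [← mulVec_mulVec, hv, mulVec_zero]

theorem vecMul_conj_eq_zero {v : m → R} (hv : Q *ᵥ v = 0) (A : Matrix k k R) :
    v ᵥ* (Qᵀ * A * Q) = 0 := by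
  rw [← vecMul_vecMul, ← vecMul_vecMul, vecMul_transpose, hv, zero_vecMul, zero_vecMul]

variable [DecidableEq k]

theorem conj_mul_conj (hQ : Q * Qᵀ = 1) (Z W : Matrix k k R) :
    (Qᵀ * Z * Q) * (Qᵀ * W * Q) = Qᵀ * (Z * W) * Q := by
  simp only [Matrix.mul_assoc]
  rw [← Matrix.mul_assoc Q, hQ, Matrix.one_mul]

noncomputable def reducedInverse (Q : Matrix k m R) (L : Matrix m m R) : Matrix m m R :=
  Qᵀ * (Q * L * Qᵀ)⁻¹ * Q

theorem mul_reducedInverse_mul_transpose_mul (hQ : Q * Qᵀ = 1) (L : Matrix m m R) :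
    L * reducedInverse Q L * (Qᵀ * Q) = L * reducedInverse Q L := by
  rw [reducedInverse, Matrix.mul_assoc, Matrix.mul_assoc _ Q, ← Matrix.mul_assoc Q, hQ,
    Matrix.one_mul, ← Matrix.mul_assoc]

theorem reducedInverse_mul_self {L : Matrix m m R} (hL : L * (Qᵀ * Q) = L)
    (hLt : IsUnit (Q * L * Qᵀ).det) : reducedInverse Q L * L = Qᵀ * Q := by
  rw [reducedInverse]
  set Lt := Q * L * Qᵀ with hLt_def
  have hQL : Q * L = Lt * Q := by
    calc Q * L = Q * (L * (Qᵀ * Q)) := by rw [hL]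
    _ = Lt * Q := by simp only [hLt_def, Matrix.mul_assoc]
  rw [Matrix.mul_assoc, hQL, Matrix.mul_assoc Qᵀ, nonsing_inv_mul_cancel_left _ _ hLt]

theorem mul_reducedInverse_mul_self {L : Matrix m m R} (hL : L * (Qᵀ * Q) = L)
    (hLt : IsUnit (Q * L * Qᵀ).det) : L * reducedInverse Q L * L = L := by
  rw [Matrix.mul_assoc, reducedInverse_mul_self hL hLt, hL]

theorem mul_reducedInverse_idempotent {L : Matrix m m R} (hL : L * (Qᵀ * Q) = L)
    (hLt : IsUnit (Q * L * Qᵀ).det) :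
    L * reducedInverse Q L * (L * reducedInverse Q L) = L * reducedInverse Q L := by
  rw [← Matrix.mul_assoc, mul_reducedInverse_mul_self hL hLt]

variable [DecidableEq m]

theorem reducedInverse_mul_conj_inv (hQ : Q * Qᵀ = 1) {L : Matrix m m R}
    (hLt : IsUnit (Q * L * Qᵀ).det) {M X : Matrix k k R} (hM : IsUnit M.det)
    (hX : 1 + X = Q * L * Qᵀ * M) :
    reducedInverse Q L * (1 + Qᵀ * X * Q) * (Qᵀ * M⁻¹ * Q) = Qᵀ * Q := by
  calc reducedInverse Q L * (1 + Qᵀ * X * Q) * (Qᵀ * M⁻¹ * Q)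
      = Qᵀ * ((Q * L * Qᵀ)⁻¹ * (1 + X)) * Q * (Qᵀ * M⁻¹ * Q) := by
        congr 1
        simp only [reducedInverse, Matrix.mul_add, Matrix.add_mul, Matrix.mul_one,
          conj_mul_conj hQ]
    _ = Qᵀ * Q := by
        rw [conj_mul_conj hQ, hX, Matrix.mul_assoc, nonsing_inv_mul_cancel_left _ _ hLt,
          mul_nonsing_inv _ hM, Matrix.one_mul]

end Compression

section MoorePenrose

variable {k m : Type*} [Fintype k] [DecidableEq k] [Fintype m] [DecidableEq m]

theorem IsMoorePenrose.unique {A B₁ B₂ : Matrix m m ℝ} (h₁ : IsMoorePenrose A B₁)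
    (h₂ : IsMoorePenrose A B₂) : B₁ = B₂ := by
  obtain ⟨h₁a, h₁b, h₁c, h₁d⟩ := h₁
  obtain ⟨h₂a, h₂b, h₂c, h₂d⟩ := h₂
  have hAB : A * B₁ = A * B₂ := by
    calc A * B₁ = (A * B₂) * (A * B₁) := by rw [← Matrix.mul_assoc, h₂a]
    _ = ((A * B₁) * (A * B₂))ᵀ := by rw [transpose_mul, h₁c, h₂c]
    _ = A * B₂ := by rw [← Matrix.mul_assoc, h₁a, h₂c]
  have hBA : B₁ * A = B₂ * A := by
    calc B₁ * A = (B₁ * A) * (B₂ * A) := by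
          simp only [Matrix.mul_assoc]; rw [← Matrix.mul_assoc A B₂ A, h₂a]
    _ = ((B₂ * A) * (B₁ * A))ᵀ := by rw [transpose_mul, h₁d, h₂d]
    _ = B₂ * A := by rw [Matrix.mul_assoc B₂, ← Matrix.mul_assoc A B₁ A, h₁a, h₂d]
  rw [← h₁b, Matrix.mul_assoc, hAB, ← Matrix.mul_assoc, hBA, h₂b]

theorem isMoorePenrose_conj {Q : Matrix k m ℝ} (hQ : Q * Qᵀ = 1) {M : Matrix k k ℝ}
    (hM : IsUnit M.det) : IsMoorePenrose (Qᵀ * M * Q) (Qᵀ * M⁻¹ * Q) := by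
  refine ⟨?_, ?_, ?_, ?_⟩
  · rw [conj_mul_conj hQ, conj_mul_conj hQ, mul_nonsing_inv _ hM, Matrix.one_mul]
  · rw [conj_mul_conj hQ, conj_mul_conj hQ, nonsing_inv_mul _ hM, Matrix.one_mul]
  · rw [conj_mul_conj hQ, mul_nonsing_inv _ hM, Matrix.mul_one, transpose_mul,
      transpose_transpose]
  · rw [conj_mul_conj hQ, nonsing_inv_mul _ hM, Matrix.mul_one, transpose_mul,
      transpose_transpose]

end MoorePenrose

theorem mul_one_sub_smul_ones_eq_self {R : Type*} [CommRing R] {k n : Type*} [Fintype n]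
    [DecidableEq n] {M : Matrix k n R} (hM : M *ᵥ 1 = 0) (c : R) :
    M * (1 - c • (of fun _ _ => 1 : Matrix n n R)) = M := by
  have hMJ : M * (of fun _ _ => 1 : Matrix n n R) = 0 := by
    ext i j
    simpa [mul_apply, mulVec, dotProduct] using congrFun hM i
  rw [Matrix.mul_sub, Matrix.mul_one, Matrix.mul_smul, hMJ, smul_zero, sub_zero]

theorem laplacian_decomposition_general {n : ℕ}
    (L : Matrix (Fin n) (Fin n) ℝ) (hrow : L *ᵥ (1 : Fin n → ℝ) = 0)
    (Q : Matrix (Fin (n - 1)) (Fin n) ℝ)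
    (hQ1 : Q *ᵥ (1 : Fin n → ℝ) = 0) (hQQ : Q * Qᵀ = 1)
    (hQP : Qᵀ * Q = 1 - (n : ℝ)⁻¹ • Matrix.of (fun _ _ => (1 : ℝ)))
    (hconn : ∀ μ ∈ spectrum ℂ ((Q * L * Qᵀ).map (Complex.ofReal)), 0 < μ.re)
    (S : Matrix (Fin (n - 1)) (Fin (n - 1)) ℝ)
    (hS : (Q * L * Qᵀ) * S + S * (Q * L * Qᵀ)ᵀ = 1)
    (Lhat : Matrix (Fin n) (Fin n) ℝ)
    (hLhat : IsMoorePenrose ((2 : ℝ) • (Qᵀ * S * Q)) Lhat) :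
    ∃ H K : Matrix (Fin n) (Fin n) ℝ,
      H * H = H ∧
      H * (1 - (n : ℝ)⁻¹ • Matrix.of (fun _ _ => (1 : ℝ))) = H ∧
      H * L = L ∧
      Kᵀ = -K ∧ K *ᵥ (1 : Fin n → ℝ) = 0 ∧ (1 : Fin n → ℝ) ᵥ* K = 0 ∧
      L = H * (1 + (2 : ℝ) • K) * Lhat := by
  have hLQ : L * (Qᵀ * Q) = L := hQP ▸ mul_one_sub_smul_ones_eq_self hrow _
  have hLt : IsUnit (Q * L * Qᵀ).det :=
    isUnit_det_of_zero_notMem_spectrum_map fun h => lt_irrefl _ (hconn 0 h)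
  have hSt : Sᵀ = S := transpose_eq_of_lyapunov hconn hS transpose_one
  have hS2 : IsUnit ((2 : ℝ) • S).det := by
    simpa [det_smul] using isUnit_det_of_lyapunov hS hSt
  have hLhat_eq : Lhat = Qᵀ * ((2 : ℝ) • S)⁻¹ * Q :=
    hLhat.unique <| by
      simpa only [Matrix.mul_smul, Matrix.smul_mul] using isMoorePenrose_conj hQQ hS2
  set X := Q * L * Qᵀ * ((2 : ℝ) • S) - 1
  have h2K : (2 : ℝ) • (Qᵀ * ((2 : ℝ)⁻¹ • X) * Q) = Qᵀ * X * Q := by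
    rw [Matrix.mul_smul, Matrix.smul_mul, smul_smul]
    norm_num
  refine ⟨L * reducedInverse Q L, Qᵀ * ((2 : ℝ)⁻¹ • X) * Q,
    mul_reducedInverse_idempotent hLQ hLt, hQP ▸ mul_reducedInverse_mul_transpose_mul hQQ L,
    mul_reducedInverse_mul_self hLQ hLt, conj_transpose_eq_neg ?_, conj_mulVec_eq_zero hQ1 _,
    vecMul_conj_eq_zero hQ1 _, ?_⟩
  · rw [transpose_smul, transpose_mul_two_smul_sub_one_of_lyapunov hS hSt, smul_neg]
  · rw [h2K, hLhat_eq, Matrix.mul_assoc L, Matrix.mul_assoc L,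
      reducedInverse_mul_conj_inv hQQ hLt hS2 (add_sub_cancel _ _), hLQ]

/-- Any connected directed graph Laplacian `L` decomposes as
`L = H(I + 2K)L̂ᵤ` where `H` is a projection onto `𝟙^⊥` with `HL = L` and `K` is skew
symmetric with zero row and column sums, `L̂ᵤ` being the effective-resistance preserving
symmetrization of `L`. -/
theorem laplacian_decomposition {n : ℕ} (hn : 0 < n)
    (L : Matrix (Fin n) (Fin n) ℝ) (hrow : L *ᵥ (1 : Fin n → ℝ) = 0)
    (Q : Matrix (Fin (n - 1)) (Fin n) ℝ)
    (hQ1 : Q *ᵥ (1 : Fin n → ℝ) = 0) (hQQ : Q * Qᵀ = 1)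
    (hQP : Qᵀ * Q = 1 - (n : ℝ)⁻¹ • Matrix.of (fun _ _ => (1 : ℝ)))
    (hconn : ∀ μ ∈ spectrum ℂ ((Q * L * Qᵀ).map (Complex.ofReal)), 0 < μ.re)
    (S : Matrix (Fin (n - 1)) (Fin (n - 1)) ℝ)
    (hS : (Q * L * Qᵀ) * S + S * (Q * L * Qᵀ)ᵀ = 1)
    (Lhat : Matrix (Fin n) (Fin n) ℝ)
    (hLhat : IsMoorePenrose ((2 : ℝ) • (Qᵀ * S * Q)) Lhat) :
    ∃ H K : Matrix (Fin n) (Fin n) ℝ,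
      H * H = H ∧
      H * (1 - (n : ℝ)⁻¹ • Matrix.of (fun _ _ => (1 : ℝ))) = H ∧
      H * L = L ∧
      Kᵀ = -K ∧ K *ᵥ (1 : Fin n → ℝ) = 0 ∧ (1 : Fin n → ℝ) ᵥ* K = 0 ∧
      L = H * (1 + (2 : ℝ) • K) * Lhat :=
  laplacian_decomposition_general L hrow Q hQ1 hQQ hQP hconn S hS Lhat hLhat
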